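/- Let (X_k) be a d-type GW process and a ∈ (0,∞)^d with f_i(a) < ∞ for all i. Let (X̄_k) be the associated process with offspring distributions p̄_i(k) = a^k p_i(k)/f_i(a). Then for every x_0, x ∈ ℕ^d, every k ≥ 1 and every l ∈ ℕ^d, P_{x_0}(X̄_k = x, N̄_k = l) = a^{l - x_0} f(a)^{x - l} · P_{x_0}(X_k = x, N_k = l), where N_k = Σ_{j=0}^k X_j is the total progeny up to generation k and f(a)^{x-l} = ∏_i f_i(a)^{x_i - l_i}. -/

import Mathlib

open MeasureTheory Filter Topology
open scoped ENNReal NNReal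

noncomputable section

namespace GW

variable {d : ℕ}

/-- `a^k = ∏_j a_j^{k_j}` for a multi-index `k`. -/
def npow (a : Fin d → ℝ) (k : Fin d → ℕ) : ℝ := ∏ j, a j ^ k j

/-- Dirac mass at `0` on `ℕ^d`. -/
def delta : (Fin d → ℕ) → ℝ := fun k => if k = 0 then 1 else 0

/-- Convolution of two (sub)probability weight functions on `ℕ^d`. -/
def conv (p q : (Fin d → ℕ) → ℝ) : (Fin d → ℕ) → ℝ :=
  fun k => ∑' a : {a : Fin d → ℕ // a ≤ k}, p a.1 * q (k - a.1)

/-- `n`-fold convolution power `p^{*n}` (with `p^{*0} = δ_0`). -/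
def convIter (p : (Fin d → ℕ) → ℝ) : ℕ → (Fin d → ℕ) → ℝ
  | 0 => delta
  | n + 1 => conv p (convIter p n)

/-- One-step transition probabilities of the multitype GW process:
`P_1(x, ·) = p_1^{*x_1} * ⋯ * p_d^{*x_d}`. -/
def trans (p : Fin d → (Fin d → ℕ) → ℝ) (x : Fin d → ℕ) : (Fin d → ℕ) → ℝ :=
  (List.ofFn (fun i => convIter (p i) (x i))).foldr conv delta

/-- `p` is a probability mass function on `ℕ^d`. -/
structure IsPMF (p : (Fin d → ℕ) → ℝ) : Prop where
  nonneg : ∀ k, 0 ≤ p k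
  hasSum : HasSum p 1

/-- `μ x` is the law on path space of the multitype GW process with offspring
distributions `p` started at `x`: a probability measure whose finite-dimensional
distributions are products of one-step GW transition probabilities. -/
def IsGW (p : Fin d → (Fin d → ℕ) → ℝ)
    (μ : (Fin d → ℕ) → Measure (ℕ → Fin d → ℕ)) : Prop :=
  (∀ x, IsProbabilityMeasure (μ x)) ∧
  ∀ (x : Fin d → ℕ) (k : ℕ) (xs : ℕ → Fin d → ℕ), xs 0 = x →
    μ x {ω | ∀ j ≤ k, ω j = xs j}
      = ENNReal.ofReal (∏ j ∈ Finset.range k, trans p (xs j) (xs (j + 1)))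

/-- Total progeny of type `i` along a path (valued in `ℝ≥0∞`). -/
def Ntot (ω : ℕ → Fin d → ℕ) (i : Fin d) : ℝ≥0∞ := ∑' k, (ω k i : ℝ≥0∞)

/-!
Exponential tilting `f ↦ a^u f(u) / c` commutes with convolution (the constants multiply), so
the one-step transitions of the associated process are `P̄₁(x, y) = a^y P₁(x, y) / f(a)^x`.
Along a path `x₀, …, x_k` these factors telescope to `a^{N_k - x₀} f(a)^{-(N_k - x_k)}`, which
depends on the path only through `x₀`, `X_k` and `N_k`; summing over the paths with prescribed
`(X_k, N_k)` gives the identity.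
-/

-- Casts `ℕ → Fin (k + 1)` reduce modulo `k + 1`; below they are only applied to indices `≤ k`.
open Fin.NatCast

lemma npow_add (a : Fin d → ℝ) (u v : Fin d → ℕ) : npow a (u + v) = npow a u * npow a v := by
  simp only [npow, Pi.add_apply, pow_add, Finset.prod_mul_distrib]

lemma prod_npow {ι : Type*} (s : Finset ι) (a : Fin d → ℝ) (t : ι → Fin d → ℕ) :
    ∏ j ∈ s, npow a (t j) = npow a (∑ j ∈ s, t j) := by
  simp only [npow, Finset.sum_apply]
  rw [Finset.prod_comm]
  simp only [Finset.prod_pow_eq_pow_sum]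

lemma npow_tsub {a : Fin d → ℝ} {u v : Fin d → ℕ} (h : u ≤ v) :
    npow a (v - u) = ∏ i, a i ^ ((v i : ℤ) - u i) := by
  refine Finset.prod_congr rfl fun i _ => ?_
  rw [← Nat.cast_sub (h i), zpow_natCast, Pi.sub_apply]

lemma inv_npow_tsub {a : Fin d → ℝ} {u v : Fin d → ℕ} (h : u ≤ v) :
    (npow a (v - u))⁻¹ = ∏ i, a i ^ ((u i : ℤ) - v i) := by
  rw [npow_tsub h, ← Finset.prod_inv_distrib]
  refine Finset.prod_congr rfl fun i _ => ?_
  rw [← zpow_neg, neg_sub]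

lemma conv_eq_sum (p q : (Fin d → ℕ) → ℝ) (k : Fin d → ℕ) :
    conv p q k = ∑ u ∈ Finset.Iic k, p u * q (k - u) := by
  rw [conv, ← Finset.tsum_subtype]
  exact ((Equiv.subtypeEquivRight fun u => Finset.mem_Iic).tsum_eq
    fun u : {u // u ≤ k} => p u * q (k - u)).symm

section Nonneg

variable {p q : (Fin d → ℕ) → ℝ}

lemma delta_nonneg (k : Fin d → ℕ) : 0 ≤ delta k := by
  unfold delta
  split_ifs <;> norm_num

lemma conv_nonneg (hp : 0 ≤ p) (hq : 0 ≤ q) : 0 ≤ conv p q := fun k => by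
  rw [conv_eq_sum]
  exact Finset.sum_nonneg fun u _ => mul_nonneg (hp u) (hq _)

lemma convIter_nonneg (hp : 0 ≤ p) (n : ℕ) : 0 ≤ convIter p n := by
  induction n with
  | zero => exact delta_nonneg
  | succ n ih => exact conv_nonneg hp ih

lemma foldr_conv_nonneg (L : List ((Fin d → ℕ) → ℝ)) (hL : ∀ f ∈ L, 0 ≤ f) :
    0 ≤ L.foldr conv delta := by
  induction L with
  | nil => exact delta_nonneg
  | cons f L ih =>
    simp only [List.mem_cons, forall_eq_or_imp] at hL
    exact conv_nonneg hL.1 (ih hL.2)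

lemma trans_nonneg {p : Fin d → (Fin d → ℕ) → ℝ} (hp : ∀ i, 0 ≤ p i) (x : Fin d → ℕ) :
    0 ≤ trans p x :=
  foldr_conv_nonneg _ fun _ hf => by
    obtain ⟨i, rfl⟩ := List.mem_ofFn.mp hf
    exact convIter_nonneg (hp i) (x i)

end Nonneg

/-- Exponential tilting; the offspring laws of the associated process are
`p̄ᵢ = tilt a (fᵢ(a)) pᵢ`. -/
def tilt (a : Fin d → ℝ) (c : ℝ) (f : (Fin d → ℕ) → ℝ) : (Fin d → ℕ) → ℝ :=
  fun u => npow a u * f u / c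

section Tilt

variable (a : Fin d → ℝ)

lemma tilt_delta : tilt a 1 delta = delta := by
  funext u
  by_cases h : u = 0 <;> simp [tilt, delta, npow, h]

lemma conv_tilt (c c' : ℝ) (f g : (Fin d → ℕ) → ℝ) :
    conv (tilt a c f) (tilt a c' g) = tilt a (c * c') (conv f g) := by
  funext k
  simp only [tilt, conv_eq_sum, Finset.mul_sum, Finset.sum_div]
  refine Finset.sum_congr rfl fun u hu => ?_
  have hsplit : npow a k = npow a u * npow a (k - u) := by
    rw [← npow_add, add_tsub_cancel_of_le (Finset.mem_Iic.mp hu)]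
  rw [hsplit]
  field_simp

lemma convIter_tilt (c : ℝ) (f : (Fin d → ℕ) → ℝ) (n : ℕ) :
    convIter (tilt a c f) n = tilt a (c ^ n) (convIter f n) := by
  induction n with
  | zero => exact (tilt_delta a).symm
  | succ n ih => rw [convIter, convIter, ih, conv_tilt, pow_succ']

lemma foldr_conv_tilt {n : ℕ} (c : Fin n → ℝ) (f : Fin n → (Fin d → ℕ) → ℝ) :
    (List.ofFn fun i => tilt a (c i) (f i)).foldr conv delta
      = tilt a (∏ i, c i) ((List.ofFn f).foldr conv delta) := by
  induction n with
  | zero => simp [tilt_delta]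
  | succ n ih =>
    rw [List.ofFn_succ, List.ofFn_succ, List.foldr_cons, List.foldr_cons, ih, conv_tilt,
      Fin.prod_univ_succ]

lemma trans_tilt (c : Fin d → ℝ) (p : Fin d → (Fin d → ℕ) → ℝ) (x : Fin d → ℕ) :
    trans (fun i => tilt a (c i) (p i)) x = tilt a (npow c x) (trans p x) := by
  simp only [trans, convIter_tilt]
  exact foldr_conv_tilt a _ _

lemma prod_trans_tilt (c : Fin d → ℝ) (p : Fin d → (Fin d → ℕ) → ℝ) (t : ℕ → Fin d → ℕ)
    (k : ℕ) :
    ∏ j ∈ Finset.range k, trans (fun i => tilt a (c i) (p i)) (t j) (t (j + 1))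
      = npow a (∑ j ∈ Finset.range k, t (j + 1)) / npow c (∑ j ∈ Finset.range k, t j)
        * ∏ j ∈ Finset.range k, trans p (t j) (t (j + 1)) := by
  simp only [trans_tilt, tilt, ← prod_npow, ← Finset.prod_div_distrib,
    ← Finset.prod_mul_distrib]
  exact Finset.prod_congr rfl fun j _ => by ring

lemma prod_trans_tilt_of_path (c : Fin d → ℝ) (p : Fin d → (Fin d → ℕ) → ℝ)
    {t : ℕ → Fin d → ℕ} {k : ℕ} {x0 x l : Fin d → ℕ} (h0 : t 0 = x0) (hk : t k = x)
    (hl : ∑ j ∈ Finset.range (k + 1), t j = l) :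
    ∏ j ∈ Finset.range k, trans (fun i => tilt a (c i) (p i)) (t j) (t (j + 1))
      = ((∏ i, a i ^ ((l i : ℤ) - x0 i)) * ∏ i, c i ^ ((x i : ℤ) - l i))
        * ∏ j ∈ Finset.range k, trans p (t j) (t (j + 1)) := by
  have hsucc : l = x0 + ∑ j ∈ Finset.range k, t (j + 1) := by
    rw [← hl, Finset.sum_range_succ', h0, add_comm]
  have hcurr : l = ∑ j ∈ Finset.range k, t j + x := by
    rw [← hl, Finset.sum_range_succ, hk]
  have hsucc' : ∑ j ∈ Finset.range k, t (j + 1) = l - x0 := by rw [hsucc, add_tsub_cancel_left]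
  have hcurr' : ∑ j ∈ Finset.range k, t j = l - x := by rw [hcurr, add_tsub_cancel_right]
  have hx0 : x0 ≤ l := by rw [hsucc]; exact le_self_add
  have hx : x ≤ l := by rw [hcurr]; exact le_add_self
  rw [prod_trans_tilt, hsucc', hcurr', npow_tsub hx0, ← inv_npow_tsub hx, div_eq_mul_inv]

end Tilt

section PathSpace

variable {q : Fin d → (Fin d → ℕ) → ℝ} {ν : (Fin d → ℕ) → Measure (ℕ → Fin d → ℕ)}

def pathPrefix (k : ℕ) (ω : ℕ → Fin d → ℕ) : Fin (k + 1) → Fin d → ℕ := fun j => ω j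

lemma measurable_pathPrefix (k : ℕ) : Measurable (pathPrefix (d := d) k) :=
  measurable_pi_lambda _ fun _ => measurable_pi_apply _

lemma pathPrefix_natCast {k j : ℕ} (hj : j ≤ k) (ω : ℕ → Fin d → ℕ) :
    pathPrefix k ω j = ω j := by
  simp [pathPrefix, Nat.mod_eq_of_lt (Nat.lt_succ_of_le hj)]

lemma pathPrefix_preimage_singleton (k : ℕ) (s : Fin (k + 1) → Fin d → ℕ) :
    pathPrefix k ⁻¹' {s} = {ω | ∀ j ≤ k, ω j = s j} := by
  ext ω
  simp only [Set.mem_preimage, Set.mem_singleton_iff, Set.mem_ofPred_eq]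
  constructor
  · intro h j hj
    rw [← pathPrefix_natCast hj ω, h]
  · intro h
    funext i
    simpa [pathPrefix] using h i i.is_le

lemma IsGW.ae_eq_start (hν : IsGW q ν) (x0 : Fin d → ℕ) : ∀ᵐ ω ∂ν x0, ω 0 = x0 := by
  have := hν.1 x0
  have hmeas : MeasurableSet {ω : ℕ → Fin d → ℕ | ω 0 = x0} :=
    measurableSet_eq_fun (measurable_pi_apply 0) measurable_const
  rw [ae_iff, ← Set.compl_ofPred, prob_compl_eq_zero_iff hmeas]
  simpa using hν.2 x0 0 (fun _ => x0) rfl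

lemma IsGW.measure_pathPrefix_preimage (hν : IsGW q ν) {x0 : Fin d → ℕ} {k : ℕ}
    {A : Set (Fin (k + 1) → Fin d → ℕ)} (hA : ∀ s ∈ A, s 0 = x0) :
    ν x0 (pathPrefix k ⁻¹' A)
      = ∑' s : A, ENNReal.ofReal (∏ j ∈ Finset.range k, trans q (s.1 j) (s.1 ↑(j + 1))) := by
  rw [← tsum_measure_preimage_singleton A.to_countable
    fun s _ => measurable_pathPrefix k (measurableSet_singleton s)]
  refine tsum_congr fun s => ?_
  rw [pathPrefix_preimage_singleton]
  exact hν.2 x0 k (fun j => s.1 j) (by simpa using hA s s.2)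

lemma IsGW.measure_eq_and_sum_eq (hν : IsGW q ν) (x0 x l : Fin d → ℕ) (k : ℕ) :
    ν x0 {ω | ω k = x ∧ ∑ j ∈ Finset.range (k + 1), ω j = l}
      = ∑' s : {s : Fin (k + 1) → Fin d → ℕ | s 0 = x0 ∧ s k = x ∧
          ∑ j ∈ Finset.range (k + 1), s j = l},
        ENNReal.ofReal (∏ j ∈ Finset.range k, trans q (s.1 j) (s.1 ↑(j + 1))) := by
  rw [← hν.measure_pathPrefix_preimage fun s hs => hs.1]
  refine measure_congr (Filter.eventuallyEq_set.mpr ?_)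
  filter_upwards [hν.ae_eq_start x0] with ω h0
  have hsum : ∑ j ∈ Finset.range (k + 1), pathPrefix k ω j = ∑ j ∈ Finset.range (k + 1), ω j :=
    Finset.sum_congr rfl fun j hj =>
      pathPrefix_natCast (Nat.lt_succ_iff.mp (Finset.mem_range.mp hj)) ω
  have h0' : pathPrefix k ω 0 = x0 := by simpa [pathPrefix] using h0
  simp only [Set.mem_preimage, Set.mem_ofPred_eq, hsum, pathPrefix_natCast le_rfl, h0', true_and]

end PathSpace

theorem assoc_joint_progeny_general {d : ℕ} (p : Fin d → (Fin d → ℕ) → ℝ)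
    (hp : ∀ i, IsPMF (p i))
    (a : Fin d → ℝ) (fa : Fin d → ℝ)
    (pbar : Fin d → (Fin d → ℕ) → ℝ)
    (hpbar : ∀ i k, pbar i k = npow a k * p i k / fa i)
    (μ μbar : (Fin d → ℕ) → Measure (ℕ → Fin d → ℕ))
    (hμ : IsGW p μ) (hμbar : IsGW pbar μbar) :
    ∀ (x0 x : Fin d → ℕ) (k : ℕ), 1 ≤ k → ∀ l : Fin d → ℕ,
      μbar x0 {ω | ω k = x ∧ (∑ j ∈ Finset.range (k + 1), ω j) = l}
        = ENNReal.ofReal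
            ((∏ i, a i ^ ((l i : ℤ) - (x0 i : ℤ))) *
              ∏ i, fa i ^ ((x i : ℤ) - (l i : ℤ))) *
          μ x0 {ω | ω k = x ∧ (∑ j ∈ Finset.range (k + 1), ω j) = l} := by
  intro x0 x k _ l
  obtain rfl : pbar = fun i => tilt a (fa i) (p i) := funext₂ hpbar
  rw [hμbar.measure_eq_and_sum_eq, hμ.measure_eq_and_sum_eq, ← ENNReal.tsum_mul_left]
  refine tsum_congr fun s => ?_
  have hT : 0 ≤ ∏ j ∈ Finset.range k, trans p (s.1 j) (s.1 ↑(j + 1)) :=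
    Finset.prod_nonneg fun _ _ => trans_nonneg (fun i => (hp i).nonneg) _ _
  rw [prod_trans_tilt_of_path a fa p (by simpa using s.2.1) s.2.2.1 s.2.2.2,
    ENNReal.ofReal_mul' hT]

/-- joint law of `(X̄_k, N̄_k)` of the associated process versus the
original process: `P_{x₀}(X̄_k = x, N̄_k = l) = a^{l-x₀} f(a)^{x-l} P_{x₀}(X_k = x, N_k = l)`. -/
theorem assoc_joint_progeny {d : ℕ} (p : Fin d → (Fin d → ℕ) → ℝ)
    (hp : ∀ i, IsPMF (p i))
    (a : Fin d → ℝ) (ha : ∀ i, 0 < a i)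
    (hfa : ∀ i, Summable fun k => p i k * npow a k)
    (fa : Fin d → ℝ) (hfadef : ∀ i, fa i = ∑' k, p i k * npow a k)
    (pbar : Fin d → (Fin d → ℕ) → ℝ)
    (hpbar : ∀ i k, pbar i k = npow a k * p i k / fa i)
    (μ μbar : (Fin d → ℕ) → Measure (ℕ → Fin d → ℕ))
    (hμ : IsGW p μ) (hμbar : IsGW pbar μbar) :
    ∀ (x0 x : Fin d → ℕ) (k : ℕ), 1 ≤ k → ∀ l : Fin d → ℕ,
      μbar x0 {ω | ω k = x ∧ (∑ j ∈ Finset.range (k + 1), ω j) = l}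
        = ENNReal.ofReal
            ((∏ i, a i ^ ((l i : ℤ) - (x0 i : ℤ))) *
              ∏ i, fa i ^ ((x i : ℤ) - (l i : ℤ))) *
          μ x0 {ω | ω k = x ∧ (∑ j ∈ Finset.range (k + 1), ω j) = l} :=
  assoc_joint_progeny_general p hp a fa pbar hpbar μ μbar hμ hμbar

end GW
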